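/- In the equational theory over {w, e, +, ·} with equations x+e=x, e+x=x, (x+y)+z=x+(y+z), (x+y)·z=y·(x·z), e·x=x, w·(x+y)=(w·x)+(w·y), (w·x)·y=y+x, w·e=e (i.e., the fragment without d), there are no non-trivial quines: the only normal form t with t·e ≡ t is e. -/

import Mathlib

/-- Ground terms over constants w, e with binary operations + (add) and · (app). -/
inductive Tm : Type
  | w : Tm
  | e : Tm
  | add : Tm → Tm → Tm
  | app : Tm → Tm → Tm
  deriving DecidableEq

open Tm

/-- Root rewrite steps: instances of the oriented equations (fragment without d). -/
inductive Root : Tm → Tm → Prop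
  | addE (x) : Root (add x e) x
  | eAdd (x) : Root (add e x) x
  | assoc (x y z) : Root (add (add x y) z) (add x (add y z))
  | appAdd (x y z) : Root (app (add x y) z) (app y (app x z))
  | appE (x) : Root (app e x) x
  | wAdd (x y) : Root (app w (add x y)) (add (app w x) (app w y))
  | wApp (x y) : Root (app (app w x) y) (add y x)
  | wE : Root (app w e) e

/-- One rewrite step: a root step applied at some subterm position. -/
inductive Step : Tm → Tm → Prop
  | root {t u} : Root t u → Step t u
  | addL {t t' u} : Step t t' → Step (add t u) (add t' u)
  | addR {t u u'} : Step u u' → Step (add t u) (add t u')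
  | appL {t t' u} : Step t t' → Step (app t u) (app t' u)
  | appR {t u u'} : Step u u' → Step (app t u) (app t u')

/-- A normal form is a term to which no rule applies. -/
def NormalForm (t : Tm) : Prop := ∀ u, ¬ Step t u

/-- Provable equality in the equational theory. -/
def TermEq : Tm → Tm → Prop := Relation.EqvGen Step

/-!
Evaluate terms in `List ℕ`, reading a list as a sum of atoms: atom `0` is `w` and atom `k + 1`
is `w · (atom k)`. Sums are concatenation, and application folds the atoms of the function over
the argument, atom `0` raising every atom of the argument and atom `k + 1` appending `k` to it.
All equations hold in this model. Application by a list adds one atom for every nonzero atom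
of the list, so a fixed point `L · [] = L` has no zero atoms and is then lowered atomwise by the
application; hence `L = []`. Finally the only normal form evaluating to `[]` is `e`.
-/

namespace ListModel

def act : List ℕ → ℕ → List ℕ
  | z, 0 => z.map (· + 1)
  | z, k + 1 => z ++ [k]

def apply (f z : List ℕ) : List ℕ := f.foldl act z

@[simp] lemma apply_nil (z : List ℕ) : apply [] z = z := rfl

@[simp] lemma apply_cons (k : ℕ) (f z : List ℕ) : apply (k :: f) z = apply f (act z k) := rfl

lemma apply_append (f g z : List ℕ) : apply (f ++ g) z = apply g (apply f z) :=
  List.foldl_append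

lemma apply_map_succ (f z : List ℕ) : apply (f.map (· + 1)) z = z ++ f := by
  induction f generalizing z with
  | nil => simp
  | cons k f ih => simp [act, ih]

lemma length_apply (f z : List ℕ) : (apply f z).length = z.length + f.countP (· ≠ 0) := by
  induction f generalizing z with
  | nil => simp
  | cons k f ih => cases k <;> simp [act, ih]; omega

lemma apply_of_forall_ne_zero {f : List ℕ} (hf : ∀ k ∈ f, k ≠ 0) (z : List ℕ) :
    apply f z = z ++ f.map (· - 1) := by
  induction f generalizing z with
  | nil => simp
  | cons k f ih =>
    obtain ⟨k, rfl⟩ := Nat.exists_eq_succ_of_ne_zero (hf k List.mem_cons_self)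
    simp [act, ih (fun a ha => hf a (List.mem_cons_of_mem _ ha))]

lemma eq_nil_of_apply_nil_eq_self {f : List ℕ} (hf : apply f [] = f) : f = [] := by
  have hne : ∀ k ∈ f, k ≠ 0 := by
    have hlen := length_apply f []
    rw [hf, List.length_nil, zero_add, eq_comm, List.countP_eq_length] at hlen
    simpa using hlen
  rw [apply_of_forall_ne_zero hne, List.nil_append] at hf
  cases f with
  | nil => rfl
  | cons k f =>
    have hk : k ≠ 0 := hne k List.mem_cons_self
    have hpred : k - 1 = k := (List.cons_eq_cons.mp hf).1
    omega

end ListModel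

open ListModel

def Tm.eval : Tm → List ℕ
  | w => [0]
  | e => []
  | add x y => x.eval ++ y.eval
  | app x y => apply x.eval y.eval

lemma Root.eval_eq {s t : Tm} (h : Root s t) : s.eval = t.eval := by
  cases h <;> simp [Tm.eval, apply_append, apply_map_succ, act]

lemma Step.eval_eq {s t : Tm} (h : Step s t) : s.eval = t.eval := by
  induction h with
  | root h => exact h.eval_eq
  | addL _ ih | addR _ ih | appL _ ih | appR _ ih => simp [Tm.eval, ih]

lemma TermEq.eval_eq {s t : Tm} (h : TermEq s t) : s.eval = t.eval :=
  (InvImage.equivalence _ Tm.eval eq_equivalence).eqvGen_iff.mp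
    (h.mono fun _ _ => Step.eval_eq)

namespace NormalForm

lemma of_add_left {x y : Tm} (h : NormalForm (add x y)) : NormalForm x :=
  fun _ hs => h _ hs.addL

lemma of_app_left {x y : Tm} (h : NormalForm (app x y)) : NormalForm x :=
  fun _ hs => h _ hs.appL

lemma of_app_right {x y : Tm} (h : NormalForm (app x y)) : NormalForm y :=
  fun _ hs => h _ hs.appR

lemma app_left_eq_w {x y : Tm} (h : NormalForm (app x y)) : x = w := by
  induction x generalizing y with
  | w => rfl
  | e => exact absurd (.root (.appE y)) (h _)
  | add a b => exact absurd (.root (.appAdd a b y)) (h _)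
  | app a b iha =>
    obtain rfl := iha h.of_app_left
    exact absurd (.root (.wApp b y)) (h _)

lemma eq_e_of_eval_eq_nil {t : Tm} (ht : NormalForm t) (h : t.eval = []) : t = e := by
  induction t with
  | w => simp [Tm.eval] at h
  | e => rfl
  | add x y ihx =>
    simp only [Tm.eval, List.append_eq_nil_iff] at h
    obtain rfl := ihx ht.of_add_left h.1
    exact absurd (.root (.eAdd y)) (ht _)
  | app x y _ ihy =>
    obtain rfl := ht.app_left_eq_w
    have hy : y.eval = [] := by simpa [Tm.eval, act] using h
    obtain rfl := ihy ht.of_app_right hy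
    exact absurd (.root .wE) (ht _)

end NormalForm

/-- in the fragment without d, there are no non-trivial quines:
the only normal form t with t·e ≡ t is e. -/
theorem no_quines_without_d :
    ∀ t : Tm, NormalForm t → TermEq (app t e) t → t = e :=
  fun _ hnf hquine => hnf.eq_e_of_eval_eq_nil (eq_nil_of_apply_nil_eq_self hquine.eval_eq)
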